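/- arXiv:1505.02049 — 9 statements merged into one kernel-verified Lean document; each statement's English description precedes it below -/
import Mathlib

section
/- Let w : ℕ → (0,∞) with w(0) = 1, and define the canonical partition function Z_{L,N} = Σ_{η ∈ ℕ^L, Σηₓ = N} Π_x w(ηₓ). If the family of canonical conditional product measures π_{L,N}[η] = (1/Z_{L,N}) Π_x w(ηₓ) is stochastically ordered in N (π_{L,N} ≤ π_{L,N+1}), then Z_{L,N}/w(N) ≤ Z_{L,N+1}/w(N+1) for all N ≥ 0. -/
/-! Test the ordering `π_{L,N} ≤ π_{L,N+1}` against the decreasing indicator of the configurations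
with every particle on one site `i`. On `Ω_{L,N}` this event is the single configuration `N • δ_i`,
of weight `w N` (as `w 0 = 1`), so the indicator has expectation `w N / Z_{L,N}`; ordering reverses
for decreasing functions, giving `w (N+1) / Z_{L,N+1} ≤ w N / Z_{L,N}`. -/

open Filter Topology

/-- Canonical partition function `Z_{L,N} = Σ_{η ∈ ℕ^L, Ση = N} Π_x w(η_x)`. -/
noncomputable def Zpart (w : ℕ → ℝ) (L N : ℕ) : ℝ :=
  ∑ η ∈ Finset.Nat.antidiagonalTuple L N, ∏ x, w (η x)

/-- The canonical measures `π_{L,N}` are stochastically ordered, `π_{L,N} ≤ π_{L,M}`: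
expectations of monotone (increasing) functions are ordered. -/
def canonicalStochLE (w : ℕ → ℝ) (L N M : ℕ) : Prop :=
  ∀ f : (Fin L → ℕ) → ℝ, Monotone f →
    (∑ η ∈ Finset.Nat.antidiagonalTuple L N, (∏ x, w (η x)) * f η) / Zpart w L N ≤
    (∑ η ∈ Finset.Nat.antidiagonalTuple L M, (∏ x, w (η x)) * f η) / Zpart w L M

open Finset Finset.Nat

variable {w : ℕ → ℝ} {L : ℕ}

lemma single_mem_antidiagonalTuple (i : Fin L) (N : ℕ) :
    Pi.single i N ∈ antidiagonalTuple L N := by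
  simp [mem_antidiagonalTuple]

lemma eq_single_of_mem_antidiagonalTuple {N : ℕ} {η : Fin L → ℕ}
    (hη : η ∈ antidiagonalTuple L N) {i : Fin L} (hsupp : ∀ x ≠ i, η x = 0) :
    η = Pi.single i N := by
  have hi : η i = N := by
    rw [← mem_antidiagonalTuple.mp hη, Fintype.sum_eq_single i hsupp]
  funext x
  by_cases hx : x = i
  · subst hx; simp [hi]
  · simp [hx, hsupp x hx]

lemma Zpart_pos (hw : ∀ n, 0 < w n) (hL : 0 < L) (N : ℕ) : 0 < Zpart w L N :=
  sum_pos (fun _ _ => prod_pos fun _ _ => hw _)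
    ⟨_, single_mem_antidiagonalTuple ⟨0, hL⟩ N⟩

lemma canonicalStochLE.antitone {N M : ℕ} (h : canonicalStochLE w L N M)
    {g : (Fin L → ℕ) → ℝ} (hg : Antitone g) :
    (∑ η ∈ antidiagonalTuple L M, (∏ x, w (η x)) * g η) / Zpart w L M ≤
      (∑ η ∈ antidiagonalTuple L N, (∏ x, w (η x)) * g η) / Zpart w L N := by
  simpa only [Pi.neg_apply, mul_neg, sum_neg_distrib, neg_div, neg_le_neg_iff] using h (-g) hg.neg

lemma antitone_indicator_supportedAt (i : Fin L) :
    Antitone fun η : Fin L → ℕ => if ∀ x ≠ i, η x = 0 then (1 : ℝ) else 0 := by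
  intro η ζ hle
  dsimp only
  by_cases hζ : ∀ x ≠ i, ζ x = 0
  · have hη : ∀ x ≠ i, η x = 0 := fun x hx => Nat.le_zero.mp (hζ x hx ▸ hle x)
    rw [if_pos hζ, if_pos hη]
  · rw [if_neg hζ]
    split_ifs <;> norm_num

lemma sum_weight_mul_indicator_supportedAt (hw0 : w 0 = 1) (i : Fin L) (N : ℕ) :
    ∑ η ∈ antidiagonalTuple L N,
      (∏ x, w (η x)) * (if ∀ x ≠ i, η x = 0 then (1 : ℝ) else 0) = w N := by
  rw [sum_eq_single_of_mem _ (single_mem_antidiagonalTuple i N)]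
  · have hsupp : ∀ x ≠ i, (Pi.single i N : Fin L → ℕ) x = 0 := fun x hx => by simp [hx]
    rw [if_pos hsupp, mul_one, Fintype.prod_eq_single i (fun x hx => by simp [hx, hw0])]
    simp
  · intro η hη hne
    rw [if_neg (fun hsupp => hne (eq_single_of_mem_antidiagonalTuple hη hsupp)), mul_zero]

/-- If the canonical conditional product measures with weights `w`, `w(0) = 1`, are
stochastically ordered in `N`, then `Z_{L,N}/w(N) ≤ Z_{L,N+1}/w(N+1)` for all `N`. -/
theorem Zratio_mono_of_canonical_ordered (w : ℕ → ℝ) (hw : ∀ n, 0 < w n)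
    (hw0 : w 0 = 1) (L : ℕ) (hL : 2 ≤ L)
    (hord : ∀ N : ℕ, canonicalStochLE w L N (N + 1)) :
    ∀ N : ℕ, Zpart w L N / w N ≤ Zpart w L (N + 1) / w (N + 1) := by
  intro N
  have hL0 : 0 < L := by omega
  have key := (hord N).antitone (antitone_indicator_supportedAt ⟨0, hL0⟩)
  rw [sum_weight_mul_indicator_supportedAt hw0, sum_weight_mul_indicator_supportedAt hw0,
    div_le_div_iff₀ (Zpart_pos hw hL0 _) (Zpart_pos hw hL0 _)] at key
  rw [div_le_div_iff₀ (hw N) (hw (N + 1))]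
  linarith
end

section
/- Let w : ℕ → (0,∞) have finite and non-zero first moment, i.e. 0 < Σ_{n≥0} n·w(n) < ∞. Then there exists a sequence N_m ∈ ℕ with N_m → ∞ such that for all m and all k ∈ {0,…,N_m − 1}, w(N_m − k)/w(N_m) ≥ 1 + k/N_m. -/
open Filter Topology

/-!
Let `a n = n * w n`. Summability forces `a n → 0`, while `a n > 0` for `n ≥ 1`, so the running
minimum of `a` on `[1, n]` keeps being undercut: there are arbitrarily large `N` with
`a N ≤ a j` for all `1 ≤ j ≤ N`. At such an `N`, `N w(N) ≤ (N - k) w(N - k)` gives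
`w(N - k) / w(N) ≥ N / (N - k) ≥ 1 + k / N`.
-/

theorem frequently_isMinOn_Icc_of_tendsto {α : Type*} [LinearOrder α] [TopologicalSpace α]
    [OrderClosedTopology α] {a : ℕ → α} {b : α} (ha : Tendsto a atTop (𝓝 b))
    (hlt : ∀ n, 1 ≤ n → b < a n) : ∃ᶠ n in atTop, IsMinOn a (Set.Icc 1 n) n := by
  rw [frequently_atTop]
  intro K
  have hbelow : ∀ᶠ M in atTop, ∀ j ∈ Set.Icc 1 K, a M < a j :=
    (eventually_all_finite (Set.finite_Icc 1 K)).2 fun j hj =>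
      ha.eventually_lt_const (hlt j hj.1)
  obtain ⟨M, hM, hMK⟩ := (hbelow.and (eventually_ge_atTop 1)).exists
  obtain ⟨n, ⟨hn1, hnM⟩, hnmin⟩ :=
    (Set.Icc 1 M).exists_min_image a (Set.finite_Icc 1 M) ⟨M, hMK, le_rfl⟩
  have hKn : K ≤ n := by
    by_contra! hnK
    exact (hM n ⟨hn1, hnK.le⟩).not_ge (hnmin M ⟨hMK, le_rfl⟩)
  exact ⟨n, hKn, fun j hj => hnmin j ⟨hj.1, hj.2.trans hnM⟩⟩

theorem one_add_div_le_div_of_mul_le_sub_mul {N k u v : ℝ} (hk : 0 ≤ k) (hkN : k < N)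
    (hu : 0 < u) (h : N * u ≤ (N - k) * v) : 1 + k / N ≤ v / u := by
  have hN : 0 < N := hk.trans_lt hkN
  rw [le_div_iff₀ hu, one_add_div hN.ne', div_mul_eq_mul_div, div_le_iff₀ hN]
  -- `(N + k)(N - k) u ≤ N² u ≤ N (N - k) v`, then cancel `N - k > 0`.
  nlinarith [mul_le_mul_of_nonneg_left h hN.le, mul_nonneg (mul_nonneg hk hk) hu.le]

theorem exists_ratio_lower_bound_seq_general (w : ℕ → ℝ) (hw : ∀ n, 0 < w n)
    (hsum : Summable fun n : ℕ => (n : ℝ) * w n) :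
    ∃ N : ℕ → ℕ, Tendsto N atTop atTop ∧
      ∀ m : ℕ, ∀ k : ℕ, k < N m →
        w (N m - k) / w (N m) ≥ 1 + (k : ℝ) / (N m : ℝ) := by
  obtain ⟨N, hN_mono, hN_min⟩ := extraction_of_frequently_atTop <|
    frequently_isMinOn_Icc_of_tendsto hsum.tendsto_atTop_zero fun n hn =>
      mul_pos (by exact_mod_cast hn) (hw n)
  refine ⟨N, hN_mono.tendsto_atTop, fun m k hk => ?_⟩
  have hmin : (N m : ℝ) * w (N m) ≤ ((N m - k : ℕ) : ℝ) * w (N m - k) :=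
    hN_min m ⟨by omega, Nat.sub_le _ _⟩
  rw [Nat.cast_sub hk.le] at hmin
  exact one_add_div_le_div_of_mul_le_sub_mul k.cast_nonneg (by exact_mod_cast hk) (hw _) hmin

/-- For positive weights `w` with finite, non-zero first moment there is a sequence
`N_m → ∞` along which `w(N_m - k)/w(N_m) ≥ 1 + k/N_m` for all `k < N_m`. -/
theorem exists_ratio_lower_bound_seq (w : ℕ → ℝ) (hw : ∀ n, 0 < w n)
    (hsum : Summable fun n : ℕ => (n : ℝ) * w n)
    (hpos : 0 < ∑' n : ℕ, (n : ℝ) * w n) :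
    ∃ N : ℕ → ℕ, Tendsto N atTop atTop ∧
      ∀ m : ℕ, ∀ k : ℕ, k < N m →
        w (N m - k) / w (N m) ≥ 1 + (k : ℝ) / (N m : ℝ) :=
  exists_ratio_lower_bound_seq_general w hw hsum
end

section
/- Let w : ℕ → (0,∞) with w(0)=1, Σ_{n} w(n) = z(1) ∈ (0,∞), w(n−1)/w(n) → 1, and suppose the two-site partition functions satisfy Z_{2,N}/w(N) → 2z(1) as N → ∞, where Z_{2,N} = Σ_{k=0}^N w(k)w(N−k). If additionally 0 < Σ n·w(n) < ∞, then there exists a sequence N_ℓ → ∞ and ℓ₀ such that for all ℓ ≥ ℓ₀ and all n ∈ {0,…,N_ℓ}, Z_{2,N_ℓ − n}/w(N_ℓ) > 2z(1). -/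
/-!
Pick `N` among the record minima of `n ↦ n w(n)`, i.e. `N w(N) ≤ n w(n)` for `1 ≤ n ≤ N`;
there are arbitrarily large ones because `n w(n) → 0`. For `M ≤ N` and `k < M` this gives
`w(M - k) / w(N) ≥ M / (M - k) ≥ 1 + k / M`, hence, keeping only the outer halves of the
convolution,
`Z_{2,M} / w(N) ≥ 2 ∑_{k < M/2} w(k) (1 + k/M)`.
The right-hand side exceeds `2 z(1)` for large `M`: the mass `M ∑_{k ≥ M/2} w(k)` lost by
truncation is at most three times the tail of the first moment, which tends to `0`, while
`∑_{k < M/2} k w(k)` tends to the positive first moment. The finitely many small `M` are handled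
by `w(N) → 0`.
-/

open Filter Topology

/-- Two-site partition function `Z_{2,N} = (w∗w)(N)`. -/
noncomputable def Ztwo (w : ℕ → ℝ) (N : ℕ) : ℝ :=
  ∑ k ∈ Finset.range (N + 1), w k * w (N - k)

open Finset

lemma Ztwo_pos {w : ℕ → ℝ} (hw : ∀ n, 0 < w n) (M : ℕ) : 0 < Ztwo w M :=
  sum_pos (fun k _ => mul_pos (hw k) (hw _)) nonempty_range_add_one

lemma two_mul_sum_range_half_le_Ztwo {w : ℕ → ℝ} (hw : ∀ n, 0 ≤ w n) (M : ℕ) :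
    2 * ∑ k ∈ range (M / 2), w k * w (M - k) ≤ Ztwo w M := by
  set f : ℕ → ℝ := fun k => w k * w (M - k)
  have hreflect : ∑ k ∈ range (M / 2), f k = ∑ k ∈ Ico (M + 1 - M / 2) (M + 1), f k := by
    have h := sum_Ico_reflect f 0 (m := M / 2) (n := M) (by omega)
    rw [Nat.sub_zero] at h
    rw [range_eq_Ico, ← h]
    refine sum_congr rfl fun k hk => ?_
    simp only [f, Nat.sub_sub_self (by simp at hk; omega : k ≤ M), mul_comm]
  calc 2 * ∑ k ∈ range (M / 2), f k
      = ∑ k ∈ range (M / 2), f k + ∑ k ∈ Ico (M + 1 - M / 2) (M + 1), f k := by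
        rw [← hreflect]; ring
    _ ≤ ∑ k ∈ range (M / 2), f k + ∑ k ∈ Ico (M / 2) (M + 1), f k :=
        add_le_add le_rfl <| sum_le_sum_of_subset_of_nonneg
          (Ico_subset_Ico (by omega) le_rfl) fun k _ _ => mul_nonneg (hw _) (hw _)
    _ = Ztwo w M := sum_range_add_sum_Ico f (by omega)

lemma exists_lt_forall_Icc_le_of_tendsto_zero {f : ℕ → ℝ} (hpos : ∀ n, 0 < n → 0 < f n)
    (hf : Tendsto f atTop (𝓝 0)) (M : ℕ) : ∃ N, M < N ∧ ∀ n ∈ Icc 1 N, f N ≤ f n := by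
  have hbelow : ∀ᶠ N' in atTop, M < N' ∧ ∀ m ∈ Icc 1 M, f N' < f m :=
    (eventually_gt_atTop M).and <| (eventually_all_finset _).2 fun m hm =>
      hf.eventually (gt_mem_nhds (hpos m (mem_Icc.1 hm).1))
  obtain ⟨N', hMN', hN'⟩ := hbelow.exists
  obtain ⟨N, hN, hmin⟩ := (Icc 1 N').exists_min_image f ⟨N', mem_Icc.2 ⟨by omega, le_rfl⟩⟩
  obtain ⟨hN1, hNN'⟩ := mem_Icc.1 hN
  refine ⟨N, ?_, fun n hn => hmin n (Icc_subset_Icc_right hNN' hn)⟩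
  by_contra! hNM
  exact (hN' N (mem_Icc.2 ⟨hN1, hNM⟩)).not_ge (hmin N' (mem_Icc.2 ⟨by omega, le_rfl⟩))

lemma add_mul_le_mul_of_forall_Icc_le {w : ℕ → ℝ} {N M k : ℕ}
    (hrec : ∀ n ∈ Icc 1 N, (N : ℝ) * w N ≤ n * w n) (hwN : 0 ≤ w N) (hMN : M ≤ N)
    (hkM : k < M) : (M + k : ℝ) * w N ≤ M * w (M - k) := by
  have hrecMk := hrec (M - k) (mem_Icc.2 ⟨by omega, by omega⟩)
  rw [Nat.cast_sub hkM.le] at hrecMk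
  refine le_of_mul_le_mul_right ?_ (sub_pos.2 (by exact_mod_cast hkM : (k : ℝ) < M))
  calc (M + k : ℝ) * w N * (M - k) = M * (M * w N) - k ^ 2 * w N := by ring
    _ ≤ M * (M * w N) := sub_le_self _ (by positivity)
    _ ≤ M * (N * w N) := by gcongr
    _ ≤ M * ((M - k) * w (M - k)) := by gcongr
    _ = M * w (M - k) * (M - k) := by ring

lemma mul_tsum_lt_sum_range_of_tail {w : ℕ → ℝ} (hw : ∀ n, 0 ≤ w n) (hz : Summable w)
    (hmom : Summable fun n : ℕ => (n : ℝ) * w n) {M h : ℕ} (hMh : M ≤ 3 * h)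
    (htail : 3 * ∑' k, ((k + h : ℕ) : ℝ) * w (k + h) < ∑ k ∈ range h, (k : ℝ) * w k) :
    M * ∑' n, w n < ∑ k ∈ range h, (M + k : ℝ) * w k := by
  have hlost : (M : ℝ) * ∑' k, w (k + h) ≤ 3 * ∑' k, ((k + h : ℕ) : ℝ) * w (k + h) := by
    rw [← tsum_mul_left, ← tsum_mul_left]
    refine (((summable_nat_add_iff h).2 hz).mul_left _).tsum_le_tsum (fun k => ?_)
      (((summable_nat_add_iff h).2 hmom).mul_left _)
    rw [← mul_assoc]
    gcongr
    · exact hw _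
    · exact_mod_cast (by omega : M ≤ 3 * (k + h))
  rw [← hz.sum_add_tsum_nat_add h]
  simp only [add_mul, sum_add_distrib, ← mul_sum, mul_add]
  linarith

lemma eventually_mul_tsum_lt_sum_range_half {w : ℕ → ℝ} (hw : ∀ n, 0 ≤ w n) (hz : Summable w)
    (hmom : Summable fun n : ℕ => (n : ℝ) * w n) (hmompos : 0 < ∑' n : ℕ, (n : ℝ) * w n) :
    ∀ᶠ M : ℕ in atTop, M * ∑' n, w n < ∑ k ∈ range (M / 2), (M + k : ℝ) * w k := by
  have htail : ∀ᶠ h in atTop,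
      3 * ∑' k, ((k + h : ℕ) : ℝ) * w (k + h) < ∑ k ∈ range h, (k : ℝ) * w k := by
    have h0 := (tendsto_sum_nat_add fun n : ℕ => (n : ℝ) * w n).const_mul 3
    rw [mul_zero] at h0
    exact h0.eventually_lt hmom.hasSum.tendsto_sum_nat hmompos
  filter_upwards [(Nat.tendsto_div_const_atTop two_ne_zero).eventually htail,
    eventually_ge_atTop 2] with M hM hM2
  exact mul_tsum_lt_sum_range_of_tail hw hz hmom (by omega) hM

lemma two_mul_tsum_mul_lt_Ztwo_of_forall_Icc_le {w : ℕ → ℝ} (hw : ∀ n, 0 < w n) {N M : ℕ}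
    (hrec : ∀ n ∈ Icc 1 N, (N : ℝ) * w N ≤ n * w n) (hMN : M ≤ N)
    (hM : M * ∑' n, w n < ∑ k ∈ range (M / 2), (M + k : ℝ) * w k) :
    2 * (∑' n, w n) * w N < Ztwo w M := by
  have hMpos : (0 : ℝ) < M := by
    rcases M.eq_zero_or_pos with rfl | hM0
    · simp at hM
    · exact_mod_cast hM0
  refine lt_of_mul_lt_mul_left ?_ hMpos.le
  calc (M : ℝ) * (2 * (∑' n, w n) * w N) = 2 * (M * ∑' n, w n) * w N := by ring
    _ < 2 * (∑ k ∈ range (M / 2), (M + k : ℝ) * w k) * w N := by gcongr; exact hw N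
    _ = 2 * ∑ k ∈ range (M / 2), w k * ((M + k : ℝ) * w N) := by
        rw [mul_assoc, sum_mul]; congr 1; exact sum_congr rfl fun k _ => by ring
    _ ≤ 2 * ∑ k ∈ range (M / 2), w k * (M * w (M - k)) := by
        refine mul_le_mul_of_nonneg_left (sum_le_sum fun k hk => ?_) zero_le_two
        exact mul_le_mul_of_nonneg_left
          (add_mul_le_mul_of_forall_Icc_le hrec (hw N).le hMN (by simp at hk; omega)) (hw k).le
    _ = M * (2 * ∑ k ∈ range (M / 2), w k * w (M - k)) := by
        simp only [mul_sum]; exact sum_congr rfl fun k _ => by ring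
    _ ≤ M * Ztwo w M := by gcongr; exact two_mul_sum_range_half_le_Ztwo (fun n => (hw n).le) M

theorem Ztwo_ratio_above_limit_general (w : ℕ → ℝ) (hw : ∀ n, 0 < w n)
    (hz : Summable w)
    (hmom : Summable fun n : ℕ => (n : ℝ) * w n)
    (hmompos : 0 < ∑' n : ℕ, (n : ℝ) * w n) :
    ∃ N : ℕ → ℕ, Tendsto N atTop atTop ∧
      ∃ ℓ₀ : ℕ, ∀ ℓ ≥ ℓ₀, ∀ n ≤ N ℓ,
        Ztwo w (N ℓ - n) / w (N ℓ) > 2 * ∑' n, w n := by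
  choose N hN hrec using exists_lt_forall_Icc_le_of_tendsto_zero
    (fun n hn => mul_pos (Nat.cast_pos.2 hn) (hw n)) hmom.tendsto_atTop_zero
  have hNtop : Tendsto N atTop atTop := tendsto_atTop_mono (fun ℓ => (hN ℓ).le) tendsto_id
  obtain ⟨M₀, hlarge⟩ := (eventually_mul_tsum_lt_sum_range_half (fun n => (hw n).le) hz hmom
    hmompos).exists_forall_of_atTop
  have hsmall : ∀ᶠ ℓ in atTop, ∀ M ∈ range M₀, 2 * (∑' n, w n) * w (N ℓ) < Ztwo w M := by
    have hwN : Tendsto (fun ℓ => 2 * (∑' n, w n) * w (N ℓ)) atTop (𝓝 0) := by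
      simpa using (hz.tendsto_atTop_zero.comp hNtop).const_mul (2 * ∑' n, w n)
    exact (eventually_all_finset _).2 fun M _ => hwN.eventually (gt_mem_nhds (Ztwo_pos hw M))
  obtain ⟨ℓ₀, hℓ₀⟩ := hsmall.exists_forall_of_atTop
  refine ⟨N, hNtop, ℓ₀, fun ℓ hℓ n _ => ?_⟩
  rw [gt_iff_lt, lt_div_iff₀ (hw _)]
  rcases lt_or_ge (N ℓ - n) M₀ with hM | hM
  · exact hℓ₀ ℓ hℓ _ (mem_range.2 hM)
  · exact two_mul_tsum_mul_lt_Ztwo_of_forall_Icc_le hw (hrec ℓ) (Nat.sub_le _ _) (hlarge _ hM)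

/-- For sub-exponential weights with finite first moment, there is a sequence
`N_ℓ → ∞` along which `Z_{2,N_ℓ - n}/w(N_ℓ) > 2 z(1)` for all `n ≤ N_ℓ`,
eventually in `ℓ`. -/
theorem Ztwo_ratio_above_limit (w : ℕ → ℝ) (hw : ∀ n, 0 < w n) (hw0 : w 0 = 1)
    (hz : Summable w)
    (hreg : Tendsto (fun n => w n / w (n + 1)) atTop (𝓝 1))
    (hsub : Tendsto (fun N => Ztwo w N / w N) atTop (𝓝 (2 * ∑' n, w n)))
    (hmom : Summable fun n : ℕ => (n : ℝ) * w n)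
    (hmompos : 0 < ∑' n : ℕ, (n : ℝ) * w n) :
    ∃ N : ℕ → ℕ, Tendsto N atTop atTop ∧
      ∃ ℓ₀ : ℕ, ∀ ℓ ≥ ℓ₀, ∀ n ≤ N ℓ,
        Ztwo w (N ℓ - n) / w (N ℓ) > 2 * ∑' n, w n :=
  Ztwo_ratio_above_limit_general w hw hz hmom hmompos
end

section
/- Let w : ℕ → (0,∞) satisfy w(n−1)/w(n) → φ_c ∈ (0,∞) and Σ_n w(n) φ_c^n = ∞. Then the conditional measure π_{2,N} on {(η₁,η₂) ∈ ℕ² : η₁+η₂=N} with π_{2,N}[η] ∝ w(η₁)w(η₂) does not exhibit condensation: it is not the case that lim_{K→∞} lim_{N→∞} π_{2,N}[max(η₁,η₂) ≥ N−K] = 1. -/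
open Filter Topology

/-- Probability under the two-site canonical measure that the maximum occupation
is at least `N - K`. -/
noncomputable def probMaxGe (w : ℕ → ℝ) (N K : ℕ) : ℝ :=
  (∑ p ∈ Finset.HasAntidiagonal.antidiagonal N, if N - K ≤ max p.1 p.2 then w p.1 * w p.2 else 0) /
    (∑ p ∈ Finset.HasAntidiagonal.antidiagonal N, w p.1 * w p.2)

/-!
Tilting `w n` to `q n = w n * φc ^ n` changes no `π_{2,N}` and gives `q n / q (n + 1) → 1`, hence
`q (N - n) / q N → 1` for each fixed `n`. Since `max η ≥ N - K` forces one site to hold at most `K`,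
for every `m`
  `π_{2,N}[max η ≥ N - K] ≤ 2 Σ_{n ≤ K} q n q (N - n) / Σ_{n ≤ m} q n q (N - n)`,
which tends to `2 Σ_{n ≤ K} q n / Σ_{n ≤ m} q n` as `N → ∞`, and this is arbitrarily small because
`Σ q n = ∞`. So the inner limit is `0` for every `K`.
-/

open Finset

theorem probMaxGe_mul_pow (w : ℕ → ℝ) {c : ℝ} (hc : c ≠ 0) (N K : ℕ) :
    probMaxGe (fun n => w n * c ^ n) N K = probMaxGe w N K := by
  have tilt : ∀ p ∈ antidiagonal N,
      w p.1 * c ^ p.1 * (w p.2 * c ^ p.2) = c ^ N * (w p.1 * w p.2) :=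
    fun p hp => by rw [← mem_antidiagonal.mp hp, pow_add]; ring
  unfold probMaxGe
  rw [sum_congr rfl fun p hp => by rw [tilt p hp, ← mul_ite_zero], sum_congr rfl tilt,
    ← mul_sum, ← mul_sum, mul_div_mul_left _ _ (pow_ne_zero N hc)]

theorem tendsto_mul_pow_ratio_one {w : ℕ → ℝ} {c : ℝ} (hc : c ≠ 0)
    (h : Tendsto (fun n => w n / w (n + 1)) atTop (𝓝 c)) :
    Tendsto (fun n => w n * c ^ n / (w (n + 1) * c ^ (n + 1))) atTop (𝓝 1) := by
  rw [← div_self hc]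
  refine (h.div_const c).congr fun n => ?_
  rw [mul_div_mul_comm, pow_succ, div_mul_cancel_left₀ (pow_ne_zero n hc), div_eq_mul_inv]

theorem tendsto_apply_sub_div_of_ratio_one {q : ℕ → ℝ} (hq : ∀ n, q n ≠ 0)
    (h : Tendsto (fun n => q n / q (n + 1)) atTop (𝓝 1)) (j : ℕ) :
    Tendsto (fun N => q (N - j) / q N) atTop (𝓝 1) := by
  induction j with
  | zero => simp [div_self (hq _)]
  | succ j ih =>
    have step : Tendsto (fun N => q (N - (j + 1)) / q (N - j)) atTop (𝓝 1) := by
      refine (h.comp (tendsto_sub_atTop_nat (j + 1))).congr' ?_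
      filter_upwards [eventually_ge_atTop (j + 1)] with N hN
      simp only [Function.comp, show N - (j + 1) + 1 = N - j by omega]
    simpa only [one_mul, div_mul_div_cancel₀ (hq _)] using step.mul ih

/-- The part of the two-site partition sum where the first site holds at most `m`. -/
def headSum (q : ℕ → ℝ) (m N : ℕ) : ℝ :=
  ∑ n ∈ range (m + 1), q n * q (N - n)

theorem tendsto_headSum_div {q : ℕ → ℝ} (hq : ∀ n, q n ≠ 0)
    (h : Tendsto (fun n => q n / q (n + 1)) atTop (𝓝 1)) (m : ℕ) :
    Tendsto (fun N => headSum q m N / q N) atTop (𝓝 (∑ n ∈ range (m + 1), q n)) := by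
  have hlim := tendsto_finsetSum (range (m + 1)) fun n _ =>
    (tendsto_apply_sub_div_of_ratio_one hq h n).const_mul (q n)
  simp only [mul_one] at hlim
  refine hlim.congr fun N => ?_
  simp only [headSum, sum_div, mul_div_assoc]

theorem sum_antidiagonal_fst_le {q : ℕ → ℝ} {K N : ℕ} (hK : K ≤ N) :
    ∑ p ∈ antidiagonal N, (if p.1 ≤ K then q p.1 * q p.2 else 0) = headSum q K N := by
  rw [Nat.sum_antidiagonal_eq_sum_range_succ_mk, ← sum_filter]
  congr 1
  ext i
  simp only [mem_filter, mem_range]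
  omega

theorem headSum_mono {q : ℕ → ℝ} (hq : ∀ n, 0 ≤ q n) {m m' : ℕ} (h : m ≤ m') (N : ℕ) :
    headSum q m N ≤ headSum q m' N :=
  sum_le_sum_of_subset_of_nonneg (range_subset_range.mpr (by omega))
    fun n _ _ => mul_nonneg (hq n) (hq _)

theorem probMaxGe_le {q : ℕ → ℝ} (hq : ∀ n, 0 ≤ q n) {K m N : ℕ} (hK : K ≤ N)
    (hm : m ≤ N) (hpos : 0 < headSum q m N) :
    probMaxGe q N K ≤ 2 * headSum q K N / headSum q m N := by
  have hnum : ∑ p ∈ antidiagonal N, (if N - K ≤ max p.1 p.2 then q p.1 * q p.2 else 0) ≤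
      2 * headSum q K N := by
    calc _ ≤ ∑ p ∈ antidiagonal N, ((if p.1 ≤ K then q p.1 * q p.2 else 0) +
          (if p.2 ≤ K then q p.1 * q p.2 else 0)) := by
          refine sum_le_sum fun p hp => ?_
          have hsum := mem_antidiagonal.mp hp
          have := mul_nonneg (hq p.1) (hq p.2)
          split_ifs <;> first | linarith | omega
      _ = 2 * headSum q K N := by
          have hswap : ∑ p ∈ antidiagonal N, (if p.2 ≤ K then q p.1 * q p.2 else 0) =
              ∑ p ∈ antidiagonal N, (if p.1 ≤ K then q p.1 * q p.2 else 0) := by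
            rw [← Nat.sum_antidiagonal_swap]
            simp only [Prod.fst_swap, Prod.snd_swap, mul_comm]
          rw [sum_add_distrib, hswap, sum_antidiagonal_fst_le hK, two_mul]
  have hden : headSum q m N ≤ ∑ p ∈ antidiagonal N, q p.1 * q p.2 := by
    rw [Nat.sum_antidiagonal_eq_sum_range_succ_mk]
    exact headSum_mono hq hm N
  have hnum_nonneg : 0 ≤ 2 * headSum q K N :=
    mul_nonneg zero_le_two (sum_nonneg fun n _ => mul_nonneg (hq n) (hq _))
  exact div_le_div₀ hnum_nonneg hnum hpos hden

theorem probMaxGe_nonneg {q : ℕ → ℝ} (hq : ∀ n, 0 ≤ q n) (N K : ℕ) :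
    0 ≤ probMaxGe q N K :=
  div_nonneg (sum_nonneg fun p _ => by split_ifs <;> first | exact mul_nonneg (hq _) (hq _) | rfl)
    (sum_nonneg fun p _ => mul_nonneg (hq _) (hq _))

theorem tendsto_probMaxGe_zero {q : ℕ → ℝ} (hq : ∀ n, 0 < q n)
    (h : Tendsto (fun n => q n / q (n + 1)) atTop (𝓝 1)) (hdiv : ¬ Summable q) (K : ℕ) :
    Tendsto (fun N => probMaxGe q N K) atTop (𝓝 0) := by
  have hq0 : ∀ n, q n ≠ 0 := fun n => (hq n).ne'
  set S : ℕ → ℝ := fun m => ∑ n ∈ range (m + 1), q n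
  have hS : Tendsto S atTop atTop :=
    ((not_summable_iff_tendsto_nat_atTop_of_nonneg fun n => (hq n).le).mp hdiv).comp
      (tendsto_add_atTop_nat 1)
  have hSpos : ∀ m, 0 < S m := fun m => sum_pos (fun n _ => hq n) nonempty_range_add_one
  have hbound : ∀ m, Tendsto (fun N => 2 * headSum q K N / headSum q m N) atTop
      (𝓝 (2 * S K / S m)) := fun m => by
    refine (((tendsto_headSum_div hq0 h K).const_mul 2).div (tendsto_headSum_div hq0 h m)
      (hSpos m).ne').congr fun N => ?_
    rw [Pi.div_apply, mul_div_assoc', div_div_div_cancel_right₀ (hq0 N), mul_div_assoc]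
  refine tendsto_order.2 ⟨fun ε hε => Eventually.of_forall fun N =>
    hε.trans_le (probMaxGe_nonneg (fun n => (hq n).le) N K), fun ε hε => ?_⟩
  obtain ⟨m, hm⟩ := ((tendsto_const_nhds.div_atTop hS).eventually (gt_mem_nhds hε)).exists
  filter_upwards [(hbound m).eventually (gt_mem_nhds hm), eventually_ge_atTop K,
    eventually_ge_atTop m] with N hN hKN hmN
  have hpos : 0 < headSum q m N := sum_pos (fun n _ => mul_pos (hq n) (hq _)) nonempty_range_add_one
  exact (probMaxGe_le (fun n => (hq n).le) hKN hmN hpos).trans_lt hN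

/-- If `w(n-1)/w(n) → φ_c ∈ (0,∞)` but the critical partition function
`Σ w(n) φ_c^n` diverges, then the two-site system does not condense:
it is not the case that `lim_{K→∞} lim_{N→∞} π_{2,N}[M₂ ≥ N-K] = 1`. -/
theorem no_condensation_of_z_diverges (w : ℕ → ℝ) (hw : ∀ n, 0 < w n)
    (φc : ℝ) (hφpos : 0 < φc)
    (hreg : Tendsto (fun n => w n / w (n + 1)) atTop (𝓝 φc))
    (hdiv : ¬ Summable fun n : ℕ => w n * φc ^ n) :
    ¬ ∃ a : ℕ → ℝ,
        (∀ K : ℕ, Tendsto (fun N => probMaxGe w N K) atTop (𝓝 (a K))) ∧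
        Tendsto a atTop (𝓝 1) := by
  rintro ⟨a, ha, hlim⟩
  have hzero : ∀ K, Tendsto (fun N => probMaxGe w N K) atTop (𝓝 0) := fun K => by
    simpa only [probMaxGe_mul_pow w hφpos.ne'] using
      tendsto_probMaxGe_zero (fun n => mul_pos (hw n) (pow_pos hφpos n))
        (tendsto_mul_pow_ratio_one hφpos.ne' hreg) hdiv K
  have ha0 : a = 0 := funext fun K => tendsto_nhds_unique (ha K) (hzero K)
  subst ha0
  exact zero_ne_one (tendsto_nhds_unique tendsto_const_nhds hlim)
end

section
/- Let w : ℕ → (0,∞) with w(n−1)/w(n) → 1, z(1) = Σ_n w(n) < ∞, and (w∗w)(N)/w(N) → 2z(1). Then for every L ≥ 2, the L-fold convolution satisfies w^{∗L}(N)/w(N) → L·z(1)^{L−1} as N → ∞. -/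
open Filter Topology

/-- `L`-fold convolution of the weights: `Z_{L,N} = Σ_{η ∈ ℕ^L, Ση = N} Π_x w(η_x)`. -/
noncomputable def Zconv (w : ℕ → ℝ) (L N : ℕ) : ℝ :=
  ∑ η ∈ Finset.Nat.antidiagonalTuple L N, ∏ x, w (η x)

/-!
Let `z = Σ w`. The induction step is: if `f ≥ 0` is summable and `f(N)/w(N) → c`, then
`(w∗f)(N)/w(N) → c z + Σ f`. Split `(w∗f)(N) = Σ_k w(k) f(N-k)` into the ranges `k < m`,
`N - k < m` and the middle. Since `w(N-j)/w(N) → 1` for each fixed `j`, the two ends, divided by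
`w(N)`, tend to `c Σ_{k<m} w(k)` and `Σ_{j<m} f(j)`. With `f ≤ C w`, the middle is at most `C`
times the middle of `w∗w`, and the hypothesis on `w∗w` says precisely that this middle, divided
by `w(N)`, tends to `2 Σ_{k≥m} w(k)`, which is small for large `m`. Applied to `f = w^{∗L}`,
whose sum is `z^L`, this gives `L z^{L-1} · z + z^L = (L+1) z^L`.
-/

open Finset

lemma Zconv_zero (w : ℕ → ℝ) (N : ℕ) : Zconv w 0 N = if N = 0 then 1 else 0 := by
  cases N <;> simp [Zconv]

lemma Zconv_one (w : ℕ → ℝ) (N : ℕ) : Zconv w 1 N = w N := by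
  simp [Zconv]

lemma Zconv_succ (w : ℕ → ℝ) (L N : ℕ) :
    Zconv w (L + 1) N = ∑ p ∈ antidiagonal N, w p.1 * Zconv w L p.2 := by
  simp only [Zconv, mul_sum, sum_sigma']
  refine sum_bij' (fun η _ => ⟨(η 0, N - η 0), Fin.tail η⟩) (fun x _ => Fin.cons x.1.1 x.2)
    ?_ ?_ ?_ ?_ ?_
  · intro η hη
    simp only [Nat.mem_antidiagonalTuple, Fin.sum_univ_succ] at hη
    simp only [mem_sigma, HasAntidiagonal.mem_antidiagonal, Nat.mem_antidiagonalTuple, Fin.tail]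
    omega
  · rintro ⟨⟨i, j⟩, η⟩ h
    simp only [mem_sigma, HasAntidiagonal.mem_antidiagonal, Nat.mem_antidiagonalTuple] at h
    simp [Nat.mem_antidiagonalTuple, Fin.sum_univ_succ, h.1, h.2]
  · intro η _
    exact Fin.cons_self_tail η
  · rintro ⟨⟨i, j⟩, η⟩ h
    simp only [mem_sigma, HasAntidiagonal.mem_antidiagonal, Nat.mem_antidiagonalTuple] at h
    simp [← h.1]
  · intro η _
    simp [Fin.prod_univ_succ, Fin.tail]

lemma Zconv_succ_eq_sum_range (w : ℕ → ℝ) (L N : ℕ) :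
    Zconv w (L + 1) N = ∑ k ∈ range (N + 1), w k * Zconv w L (N - k) := by
  rw [Zconv_succ, Nat.sum_antidiagonal_eq_sum_range_succ_mk]

lemma Zconv_nonneg {w : ℕ → ℝ} (hw : ∀ n, 0 ≤ w n) (L N : ℕ) : 0 ≤ Zconv w L N :=
  sum_nonneg fun _ _ => prod_nonneg fun _ _ => hw _

lemma hasSum_Zconv {w : ℕ → ℝ} (hw : ∀ n, 0 ≤ w n) (hz : Summable w) (L : ℕ) :
    HasSum (Zconv w L) ((∑' n, w n) ^ L) := by
  induction L with
  | zero => simpa [funext (Zconv_zero w)] using hasSum_ite_eq 0 (1 : ℝ)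
  | succ L ih =>
    have hwn : Summable (‖w ·‖) := hz.congr fun n => (Real.norm_of_nonneg (hw n)).symm
    have hZn : Summable (‖Zconv w L ·‖) :=
      ih.summable.congr fun N => (Real.norm_of_nonneg (Zconv_nonneg hw L N)).symm
    rw [funext (Zconv_succ w L), pow_succ', ← ih.tsum_eq,
      tsum_mul_tsum_eq_tsum_sum_antidiagonal_of_summable_norm hwn hZn]
    exact (summable_norm_sum_mul_antidiagonal_of_summable_norm hwn hZn).of_norm.hasSum

lemma tendsto_of_forall_eventually_dist_lt {ι α : Type*} [PseudoMetricSpace α] {l : Filter ι}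
    {g : ι → α} {a : α}
    (h : ∀ ε > 0, ∃ (g' : ι → α) (b : α), Tendsto g' l (𝓝 b) ∧ dist b a < ε ∧
      ∀ᶠ i in l, dist (g i) (g' i) < ε) :
    Tendsto g l (𝓝 a) := by
  refine Metric.tendsto_nhds.2 fun ε hε => ?_
  obtain ⟨g', b, hg', hba, hgg'⟩ := h (ε / 3) (by positivity)
  filter_upwards [hgg', Metric.tendsto_nhds.1 hg' (ε / 3) (by positivity)] with i h₁ h₂
  calc dist (g i) a ≤ dist (g i) (g' i) + dist (g' i) b + dist b a := dist_triangle4 _ _ _ _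
    _ < ε := by linarith

lemma exists_le_mul_of_tendsto_div {w f : ℕ → ℝ} {c : ℝ} (hw : ∀ n, 0 < w n)
    (hc : Tendsto (fun n => f n / w n) atTop (𝓝 c)) : ∃ C, ∀ n, f n ≤ C * w n := by
  obtain ⟨C, hC⟩ := hc.bddAbove_range
  exact ⟨C, fun n => (div_le_iff₀ (hw n)).1 (hC (Set.mem_range_self n))⟩

lemma sum_range_succ_mul_sub_split {R : Type*} [Mul R] [AddCommMonoid R] (u v : ℕ → R)
    {m N : ℕ} (h : 2 * m ≤ N + 1) :
    ∑ k ∈ range (N + 1), u k * v (N - k) = ∑ k ∈ range m, u k * v (N - k)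
      + ∑ k ∈ Ico m (N + 1 - m), u k * v (N - k) + ∑ j ∈ range m, u (N - j) * v j := by
  have htail : ∑ j ∈ range m, u (N - j) * v j = ∑ j ∈ range m, u (N - j) * v (N - (N - j)) :=
    sum_congr rfl fun j hj => by rw [Nat.sub_sub_self (by grind)]
  rw [htail, range_eq_Ico, range_eq_Ico, sum_Ico_reflect (fun k => u k * v (N - k)) _ (by omega),
    Nat.sub_zero, sum_Ico_consecutive _ (Nat.zero_le m) (by omega),
    sum_Ico_consecutive _ (Nat.zero_le _) (by omega)]

section RatioLimits

variable {w : ℕ → ℝ}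

lemma tendsto_sub_div_self (hw : ∀ n, 0 < w n)
    (hreg : Tendsto (fun n => w n / w (n + 1)) atTop (𝓝 1)) (j : ℕ) :
    Tendsto (fun N => w (N - j) / w N) atTop (𝓝 1) := by
  induction j with
  | zero => simpa using tendsto_const_nhds.congr fun N => (div_self (hw N).ne').symm
  | succ j ih =>
    have hstep : Tendsto (fun N => w (N - (j + 1)) / w (N - j)) atTop (𝓝 1) :=
      (hreg.comp (tendsto_sub_atTop_nat (j + 1))).congr' <| by
        filter_upwards [eventually_ge_atTop (j + 1)] with N hN
        simp only [Function.comp, show N - (j + 1) + 1 = N - j by omega]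
    simpa using (hstep.mul ih).congr fun N => div_mul_div_cancel₀ (hw _).ne'

lemma tendsto_sum_head_div (hw : ∀ n, 0 < w n)
    (hreg : Tendsto (fun n => w n / w (n + 1)) atTop (𝓝 1)) {f : ℕ → ℝ} {c : ℝ}
    (hc : Tendsto (fun N => f N / w N) atTop (𝓝 c)) (m : ℕ) :
    Tendsto (fun N => (∑ k ∈ range m, w k * f (N - k)) / w N) atTop
      (𝓝 (c * ∑ k ∈ range m, w k)) := by
  simp_rw [sum_div, mul_sum]
  refine tendsto_finsetSum _ fun k _ => ?_
  have hk := ((hc.comp (tendsto_sub_atTop_nat k)).mul (tendsto_sub_div_self hw hreg k)).const_mul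
    (w k)
  rw [mul_one, mul_comm] at hk
  refine hk.congr fun N => ?_
  simp only [Function.comp, div_mul_div_cancel₀ (hw _).ne', mul_div_assoc]

lemma tendsto_sum_tail_div (hw : ∀ n, 0 < w n)
    (hreg : Tendsto (fun n => w n / w (n + 1)) atTop (𝓝 1)) (f : ℕ → ℝ) (m : ℕ) :
    Tendsto (fun N => (∑ j ∈ range m, w (N - j) * f j) / w N) atTop
      (𝓝 (∑ j ∈ range m, f j)) := by
  simp_rw [sum_div]
  refine tendsto_finsetSum _ fun j _ => ?_
  simpa [div_mul_eq_mul_div] using (tendsto_sub_div_self hw hreg j).mul_const (f j)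

lemma tendsto_sum_mid_div (hw : ∀ n, 0 < w n)
    (hreg : Tendsto (fun n => w n / w (n + 1)) atTop (𝓝 1))
    (hww : Tendsto (fun N => (∑ k ∈ range (N + 1), w k * w (N - k)) / w N) atTop
      (𝓝 (2 * ∑' n, w n))) (m : ℕ) :
    Tendsto (fun N => (∑ k ∈ Ico m (N + 1 - m), w k * w (N - k)) / w N) atTop
      (𝓝 (2 * (∑' n, w n - ∑ k ∈ range m, w k))) := by
  have hw1 : Tendsto (fun N => w N / w N) atTop (𝓝 1) :=
    tendsto_const_nhds.congr fun N => (div_self (hw N).ne').symm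
  have h := (hww.sub (tendsto_sum_head_div hw hreg hw1 m)).sub (tendsto_sum_tail_div hw hreg w m)
  rw [one_mul, sub_sub, ← two_mul, ← mul_sub] at h
  refine h.congr' ?_
  filter_upwards [eventually_ge_atTop (2 * m)] with N hN
  rw [sum_range_succ_mul_sub_split w w (by omega : 2 * m ≤ N + 1)]
  ring

end RatioLimits

lemma tendsto_sum_range_mul_sub_div {w f : ℕ → ℝ} (hw : ∀ n, 0 < w n)
    (hreg : Tendsto (fun n => w n / w (n + 1)) atTop (𝓝 1)) (hz : Summable w)
    (hww : Tendsto (fun N => (∑ k ∈ range (N + 1), w k * w (N - k)) / w N) atTop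
      (𝓝 (2 * ∑' n, w n)))
    (hf : ∀ n, 0 ≤ f n) (hfs : Summable f) {c : ℝ}
    (hc : Tendsto (fun N => f N / w N) atTop (𝓝 c)) :
    Tendsto (fun N => (∑ k ∈ range (N + 1), w k * f (N - k)) / w N) atTop
      (𝓝 (c * ∑' n, w n + ∑' n, f n)) := by
  obtain ⟨C, hC⟩ := exists_le_mul_of_tendsto_div hw hc
  have hSw := hz.hasSum.tendsto_sum_nat
  refine tendsto_of_forall_eventually_dist_lt fun ε hε => ?_
  have hbulk : Tendsto (fun m => c * ∑ k ∈ range m, w k + ∑ k ∈ range m, f k) atTop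
      (𝓝 (c * ∑' n, w n + ∑' n, f n)) := (hSw.const_mul c).add hfs.hasSum.tendsto_sum_nat
  have hrest : Tendsto (fun m => C * (2 * (∑' n, w n - ∑ k ∈ range m, w k))) atTop (𝓝 0) := by
    simpa using (((tendsto_const_nhds (x := ∑' n, w n)).sub hSw).const_mul 2).const_mul C
  obtain ⟨m, hbulk_m, hrest_m⟩ :=
    ((Metric.tendsto_nhds.1 hbulk ε hε).and (hrest.eventually_lt_const hε)).exists
  refine ⟨_, _, (tendsto_sum_head_div hw hreg hc m).add (tendsto_sum_tail_div hw hreg f m),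
    hbulk_m, ?_⟩
  filter_upwards [((tendsto_sum_mid_div hw hreg hww m).const_mul C).eventually_lt_const hrest_m,
    eventually_ge_atTop (2 * m)] with N hlt hN
  rw [sum_range_succ_mul_sub_split w f (by omega : 2 * m ≤ N + 1)]
  set M := ∑ k ∈ Ico m (N + 1 - m), w k * f (N - k)
  have hM0 : 0 ≤ M := sum_nonneg fun k _ => mul_nonneg (hw k).le (hf _)
  have hMle : M ≤ C * ∑ k ∈ Ico m (N + 1 - m), w k * w (N - k) := by
    rw [mul_sum]
    exact sum_le_sum fun k _ => by nlinarith [hC (N - k), hw k]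
  rw [Real.dist_eq, add_div, add_div, add_sub_add_right_eq_sub, add_sub_cancel_left,
    abs_of_nonneg (div_nonneg hM0 (hw N).le)]
  calc M / w N ≤ C * (∑ k ∈ Ico m (N + 1 - m), w k * w (N - k)) / w N :=
        div_le_div_of_nonneg_right hMle (hw N).le
    _ < ε := by rwa [mul_div_assoc]

/-- If `w(n-1)/w(n) → 1`, `z(1) = Σ w(n) < ∞` and `(w∗w)(N)/w(N) → 2 z(1)`, then for
every `L ≥ 2` the `L`-fold convolution satisfies `w^{∗L}(N)/w(N) → L z(1)^{L-1}`. -/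
theorem conv_ratio_limit_all_L (w : ℕ → ℝ) (hw : ∀ n, 0 < w n)
    (hreg : Tendsto (fun n => w n / w (n + 1)) atTop (𝓝 1))
    (hz : Summable w)
    (hsub : Tendsto (fun N => Zconv w 2 N / w N) atTop (𝓝 (2 * ∑' n, w n))) :
    ∀ L : ℕ, 2 ≤ L →
      Tendsto (fun N => Zconv w L N / w N) atTop
        (𝓝 ((L : ℝ) * (∑' n, w n) ^ (L - 1))) := by
  intro L hL
  have hww : Tendsto (fun N => (∑ k ∈ range (N + 1), w k * w (N - k)) / w N) atTop
      (𝓝 (2 * ∑' n, w n)) := by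
    refine hsub.congr fun N => ?_
    rw [Zconv_succ_eq_sum_range]
    simp only [Zconv_one]
  induction L, hL using Nat.le_induction with
  | base => simpa using hsub
  | succ L hL ih =>
    have hZ := hasSum_Zconv (fun n => (hw n).le) hz L
    convert tendsto_sum_range_mul_sub_div hw hreg hz hww (Zconv_nonneg (fun n => (hw n).le) L)
      hZ.summable ih using 2
    · rw [Zconv_succ_eq_sum_range]
    · obtain ⟨L, rfl⟩ : ∃ k, L = k + 1 := ⟨L - 1, by omega⟩
      rw [hZ.tsum_eq]
      push_cast
      ring
end

section
/- Let w satisfy w(n−1)/w(n) → φ_c < ∞, z(φ_c) < ∞, and Z_{L,N}/w(N) → L z(φ_c)^{L−1} as N → ∞. Then, conditioned on the maximum being at site L, the distribution of the remaining sites converges pointwise to the critical product measure: for all fixed n₁,…,n_{L−1}, π_{L,N}[η₁=n₁,…,η_{L−1}=n_{L−1} | M_L = η_L] → Π_{i=1}^{L−1} w(n_i) φ_c^{n_i}/z(φ_c) as N → ∞. -/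
open Filter Topology

/-- Given the maximum is attained at the last site (site `L` of `L = K+1` sites), the
conditional probability that the remaining sites take values `n₁,…,n_{L-1}`. -/
noncomputable def condBulkProb (w : ℕ → ℝ) (K : ℕ) (n : Fin K → ℕ) (N : ℕ) : ℝ :=
  (∑ η ∈ Finset.Nat.antidiagonalTuple (K + 1) N,
      if (∀ i : Fin K, η i.castSucc = n i) ∧ (∀ x, η x ≤ η (Fin.last K)) then
        ∏ x, w (η x) else 0) /
  (∑ η ∈ Finset.Nat.antidiagonalTuple (K + 1) N,
      if (∀ x, η x ≤ η (Fin.last K)) then ∏ x, w (η x) else 0)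

/-!
For `N ≥ 2 ∑ nᵢ` the numerator of `condBulkProb` is the single term `∏ w(nᵢ) · w(N - ∑ nᵢ)`,
and iterating the ratio condition gives `w(N - S) / w(N) → φ_c ^ S`. It remains to show that
the denominator `D_N` satisfies `D_N / w(N) → z^K`.

Let `G_R(N)` be the weight of the configurations in which every site except a given one holds
at most `R`; by symmetry it does not depend on the site, and `G_R(N) / w(N)` tends to the
truncated partition function `(∑_{j ≤ R} w(j) φ_c^j)^K`. For `N > (K+1) R` the given site is
then the strict maximum, so these `K + 1` events are disjoint and only the one for the last site
meets `{M_L = η_L}`: hence `G_R(N) ≤ D_N` and `D_N + K G_R(N) ≤ Z_{K+1,N}`. Divided by `w(N)`,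
the hypothesis on `Z_{K+1,N}` squeezes `D_N / w(N)` to `z^K` as first `N → ∞`, then `R → ∞`.
-/

open Finset

theorem tendsto_of_forall_eventually_between {α β ι : Type*} [TopologicalSpace α]
    [LinearOrder α] [OrderTopology α] {l : Filter β} {l' : Filter ι} [l'.NeBot] {u : β → α}
    {lo hi : ι → β → α} {A B : ι → α} {a : α}
    (hlo : ∀ R, Tendsto (lo R) l (𝓝 (A R))) (hhi : ∀ R, Tendsto (hi R) l (𝓝 (B R)))
    (hA : Tendsto A l' (𝓝 a)) (hB : Tendsto B l' (𝓝 a))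
    (hbetween : ∀ R, ∀ᶠ x in l, lo R x ≤ u x ∧ u x ≤ hi R x) : Tendsto u l (𝓝 a) := by
  rw [tendsto_order]
  refine ⟨fun b hb => ?_, fun b hb => ?_⟩
  · obtain ⟨R, hR⟩ := (hA.eventually (lt_mem_nhds hb)).exists
    filter_upwards [(hlo R).eventually (lt_mem_nhds hR), hbetween R] with x h₁ h₂
    exact h₁.trans_le h₂.1
  · obtain ⟨R, hR⟩ := (hB.eventually (gt_mem_nhds hb)).exists
    filter_upwards [(hhi R).eventually (gt_mem_nhds hR), hbetween R] with x h₁ h₂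
    exact h₂.2.trans_lt h₁

theorem tendsto_div_sub_of_tendsto_div_succ {w : ℕ → ℝ} (hw : ∀ n, w n ≠ 0) {φ : ℝ}
    (hreg : Tendsto (fun n => w n / w (n + 1)) atTop (𝓝 φ)) (S : ℕ) :
    Tendsto (fun N => w (N - S) / w N) atTop (𝓝 (φ ^ S)) := by
  induction S with
  | zero => simp [div_self (hw _)]
  | succ S ih =>
    have hstep : Tendsto (fun N => w (N - (S + 1)) / w (N - S)) atTop (𝓝 φ) := by
      refine (hreg.comp (tendsto_sub_atTop_nat (S + 1))).congr' ?_
      filter_upwards [eventually_ge_atTop (S + 1)] with N hN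
      simp [show N - (S + 1) + 1 = N - S by omega]
    rw [pow_succ']
    exact (hstep.mul ih).congr fun N => div_mul_div_cancel₀ (hw _)

namespace Finset.Nat

theorem sum_antidiagonalTuple_comp_perm {M : Type*} [AddCommMonoid M] {k N : ℕ}
    (σ : Equiv.Perm (Fin k)) (f : (Fin k → ℕ) → M) :
    ∑ η ∈ antidiagonalTuple k N, f (η ∘ σ) = ∑ η ∈ antidiagonalTuple k N, f η := by
  refine sum_nbij' (· ∘ σ) (· ∘ σ.symm) (fun η hη => ?_) (fun η hη => ?_)
    (fun η _ => by ext; simp) (fun η _ => by ext; simp) (fun _ _ => rfl)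
  · simpa [mem_antidiagonalTuple, Function.comp_def, Equiv.sum_comp] using hη
  · simpa [mem_antidiagonalTuple, Function.comp_def, Equiv.sum_comp] using hη

theorem sum_antidiagonalTuple_ite_init_mem {M : Type*} [AddCommMonoid M] {K N : ℕ}
    (s : Finset (Fin K → ℕ)) (hs : ∀ m ∈ s, ∑ i, m i ≤ N) (f : (Fin (K + 1) → ℕ) → M) :
    ∑ η ∈ antidiagonalTuple (K + 1) N, (if Fin.init η ∈ s then f η else 0) =
      ∑ m ∈ s, f (Fin.snoc m (N - ∑ i, m i)) := by
  rw [← sum_filter, eq_comm]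
  refine sum_nbij' (fun m => Fin.snoc m (N - ∑ i, m i)) Fin.init (fun m hm => ?_)
    (fun η hη => (mem_filter.1 hη).2) (fun m _ => Fin.init_snoc _ _) (fun η hη => ?_)
    (fun _ _ => rfl)
  · simp only [mem_filter, mem_antidiagonalTuple, Fin.sum_univ_castSucc, Fin.snoc_castSucc,
      Fin.snoc_last, Fin.init_snoc]
    exact ⟨by have := hs m hm; omega, hm⟩
  · obtain ⟨hsum, -⟩ := mem_filter.1 hη
    rw [mem_antidiagonalTuple, Fin.sum_univ_castSucc] at hsum
    conv_rhs => rw [← Fin.snoc_init_self η]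
    congr 1
    simp only [Fin.init]
    omega

end Finset.Nat

theorem lt_of_mem_antidiagonalTuple_of_forall_ne_le {k N R : ℕ} {η : Fin k → ℕ}
    (hη : η ∈ Finset.Nat.antidiagonalTuple k N) (hN : k * R < N) {i : Fin k}
    (hbound : ∀ y ≠ i, η y ≤ R) : R < η i := by
  classical
  rw [Finset.Nat.mem_antidiagonalTuple, ← add_sum_erase _ _ (mem_univ i)] at hη
  have hrest : ∑ y ∈ univ.erase i, η y ≤ (k - 1) * R := by
    calc ∑ y ∈ univ.erase i, η y ≤ ∑ _y ∈ univ.erase i, R :=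
          sum_le_sum fun y hy => hbound y (ne_of_mem_erase hy)
      _ = (k - 1) * R := by simp [card_erase_of_mem]
  have : (k - 1) * R + R = k * R := by
    cases k with
    | zero => exact i.elim0
    | succ k => simp [add_mul]
  omega

noncomputable def restBoundedWeight (w : ℕ → ℝ) (k R N : ℕ) (i : Fin k) : ℝ :=
  ∑ η ∈ Finset.Nat.antidiagonalTuple k N, if ∀ y ≠ i, η y ≤ R then ∏ x, w (η x) else 0

noncomputable def maxAtLastWeight (w : ℕ → ℝ) (K N : ℕ) : ℝ :=
  ∑ η ∈ Finset.Nat.antidiagonalTuple (K + 1) N,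
    if ∀ x, η x ≤ η (Fin.last K) then ∏ x, w (η x) else 0

section Weights

variable (w : ℕ → ℝ)

theorem restBoundedWeight_eq {k : ℕ} (R N : ℕ) (i j : Fin k) :
    restBoundedWeight w k R N i = restBoundedWeight w k R N j := by
  set σ := Equiv.swap j i
  rw [restBoundedWeight, restBoundedWeight,
    ← Finset.Nat.sum_antidiagonalTuple_comp_perm σ fun η =>
      if ∀ y ≠ j, η y ≤ R then ∏ x, w (η x) else 0]
  refine sum_congr rfl fun η _ => ?_
  have hbound : (∀ y ≠ i, η y ≤ R) ↔ ∀ y ≠ j, η (σ y) ≤ R := by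
    refine (σ.forall_congr fun y => ?_).symm
    simp only [σ, ne_eq, Equiv.swap_apply_eq_iff, Equiv.swap_apply_right]
  simp only [hbound, Function.comp_apply, Equiv.prod_comp σ fun x => w (η x)]

theorem restBoundedWeight_last (K R N : ℕ) (hN : K * R ≤ N) :
    restBoundedWeight w (K + 1) R N (Fin.last K) =
      ∑ m ∈ Fintype.piFinset fun _ : Fin K => range (R + 1),
        (∏ i, w (m i)) * w (N - ∑ i, m i) := by
  have hbox : ∀ m ∈ Fintype.piFinset fun _ : Fin K => range (R + 1), ∑ i, m i ≤ N := by
    intro m hm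
    calc ∑ i, m i ≤ ∑ _i : Fin K, R :=
          sum_le_sum fun i _ => Nat.lt_succ_iff.1 (mem_range.1 (Fintype.mem_piFinset.1 hm i))
      _ ≤ N := by simpa using hN
  calc restBoundedWeight w (K + 1) R N (Fin.last K)
      = ∑ η ∈ Finset.Nat.antidiagonalTuple (K + 1) N,
          if Fin.init η ∈ Fintype.piFinset fun _ : Fin K => range (R + 1) then ∏ x, w (η x)
          else 0 := by
        refine sum_congr rfl fun η _ => ?_
        simp [Fin.forall_fin_succ', Fintype.mem_piFinset, Fin.init]
    _ = _ := by
        rw [Finset.Nat.sum_antidiagonalTuple_ite_init_mem _ hbox]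
        simp [Fin.prod_univ_castSucc]

theorem tendsto_restBoundedWeight_last_div (hw : ∀ n, w n ≠ 0) {φ : ℝ}
    (hreg : Tendsto (fun n => w n / w (n + 1)) atTop (𝓝 φ)) (K R : ℕ) :
    Tendsto (fun N => restBoundedWeight w (K + 1) R N (Fin.last K) / w N) atTop
      (𝓝 ((∑ j ∈ range (R + 1), w j * φ ^ j) ^ K)) := by
  have hlim : (∑ j ∈ range (R + 1), w j * φ ^ j) ^ K =
      ∑ m ∈ Fintype.piFinset fun _ : Fin K => range (R + 1),
        (∏ i, w (m i)) * φ ^ ∑ i, m i := by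
    rw [← Fin.prod_const, prod_univ_sum]
    exact sum_congr rfl fun m _ => by rw [prod_mul_distrib, prod_pow_eq_pow_sum]
  rw [hlim]
  refine (tendsto_finsetSum _ fun m _ =>
    tendsto_const_nhds.mul (tendsto_div_sub_of_tendsto_div_succ hw hreg _)).congr' ?_
  filter_upwards [eventually_ge_atTop (K * R)] with N hN
  rw [restBoundedWeight_last w K R N hN, sum_div]
  simp_rw [mul_div_assoc]

theorem restBoundedWeight_last_le_maxAtLastWeight (hw : ∀ n, 0 ≤ w n) {K R N : ℕ}
    (hN : (K + 1) * R < N) :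
    restBoundedWeight w (K + 1) R N (Fin.last K) ≤ maxAtLastWeight w K N := by
  refine sum_le_sum fun η hη => ?_
  by_cases hbound : ∀ y ≠ Fin.last K, η y ≤ R
  · have hlast := lt_of_mem_antidiagonalTuple_of_forall_ne_le hη hN hbound
    rw [if_pos hbound, if_pos fun x => ?_]
    rcases eq_or_ne x (Fin.last K) with rfl | hx
    · exact le_rfl
    · exact (hbound x hx).trans hlast.le
  · rw [if_neg hbound]
    split_ifs
    exacts [prod_nonneg fun x _ => hw _, le_rfl]

theorem ite_add_sum_ite_le {ι M : Type*} [Fintype ι] [AddCommMonoid M] [PartialOrder M]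
    [IsOrderedAddMonoid M] {P : Prop} [Decidable P] {Q : ι → Prop} [DecidablePred Q] {c : M}
    (hc : 0 ≤ c) (hPQ : ∀ i, P → ¬Q i) (hQ : ∀ i j, Q i → Q j → i = j) :
    (if P then c else 0) + ∑ i, (if Q i then c else 0) ≤ c := by
  by_cases hP : P
  · rw [if_pos hP, sum_eq_zero fun i _ => if_neg (hPQ i hP), add_zero]
  rw [if_neg hP, zero_add]
  by_cases hex : ∃ i, Q i
  · obtain ⟨i, hi⟩ := hex
    rw [sum_eq_single i (fun j _ hj => if_neg fun hQj => hj (hQ j i hQj hi)) (by simp),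
      if_pos hi]
  · push Not at hex
    rw [sum_eq_zero fun i _ => if_neg (hex i)]
    exact hc

theorem maxAtLastWeight_add_sum_restBoundedWeight_le_Zconv (hw : ∀ n, 0 ≤ w n) {K R N : ℕ}
    (hN : (K + 1) * R < N) :
    maxAtLastWeight w K N + ∑ i : Fin K, restBoundedWeight w (K + 1) R N i.castSucc ≤
      Zconv w (K + 1) N := by
  simp only [maxAtLastWeight, restBoundedWeight]
  rw [sum_comm, ← sum_add_distrib]
  refine sum_le_sum fun η hη => ite_add_sum_ite_le (prod_nonneg fun x _ => hw _)
    (fun i hmax hbound => ?_) (fun i j hi hj => ?_)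
  · have := lt_of_mem_antidiagonalTuple_of_forall_ne_le hη hN hbound
    have := hmax i.castSucc
    have := hbound (Fin.last K) (Fin.castSucc_lt_last i).ne'
    omega
  · by_contra hij
    have := lt_of_mem_antidiagonalTuple_of_forall_ne_le hη hN hi
    have := hj i.castSucc (by simpa using hij)
    omega

theorem tendsto_maxAtLastWeight_div (hw : ∀ n, 0 < w n) {φ : ℝ}
    (hreg : Tendsto (fun n => w n / w (n + 1)) atTop (𝓝 φ))
    (hz : Summable fun n : ℕ => w n * φ ^ n) (K : ℕ)
    (hsub : Tendsto (fun N => Zconv w (K + 1) N / w N) atTop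
      (𝓝 (((K : ℝ) + 1) * (∑' n : ℕ, w n * φ ^ n) ^ K))) :
    Tendsto (fun N => maxAtLastWeight w K N / w N) atTop (𝓝 ((∑' n : ℕ, w n * φ ^ n) ^ K)) := by
  set z := ∑' n : ℕ, w n * φ ^ n
  set P : ℕ → ℝ := fun R => (∑ j ∈ range (R + 1), w j * φ ^ j) ^ K
  set G : ℕ → ℕ → ℝ := fun R N => restBoundedWeight w (K + 1) R N (Fin.last K) / w N
  have hP : Tendsto P atTop (𝓝 (z ^ K)) :=
    (hz.hasSum.tendsto_sum_nat.comp (tendsto_add_atTop_nat 1)).pow K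
  have hG (R : ℕ) : Tendsto (G R) atTop (𝓝 (P R)) :=
    tendsto_restBoundedWeight_last_div w (fun n => (hw n).ne') hreg K R
  have hupper : Tendsto (fun R => ((K : ℝ) + 1) * z ^ K - K * P R) atTop (𝓝 (z ^ K)) := by
    convert tendsto_const_nhds.sub (hP.const_mul (K : ℝ)) using 2
    ring
  refine tendsto_of_forall_eventually_between (lo := G)
    (hi := fun R N => Zconv w (K + 1) N / w N - K * G R N) hG
    (fun R => hsub.sub ((hG R).const_mul _)) hP hupper fun R => ?_
  filter_upwards [eventually_gt_atTop ((K + 1) * R)] with N hN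
  have hwN := hw N
  have hlower := restBoundedWeight_last_le_maxAtLastWeight w (fun n => (hw n).le) hN
  have hsum := maxAtLastWeight_add_sum_restBoundedWeight_le_Zconv w (fun n => (hw n).le) hN
  simp only [restBoundedWeight_eq w R N _ (Fin.last K), sum_const, card_univ, Fintype.card_fin,
    nsmul_eq_mul] at hsum
  refine ⟨div_le_div_of_nonneg_right hlower hwN.le, ?_⟩
  rw [le_sub_iff_add_le, ← mul_div_assoc, ← add_div, div_le_div_iff_of_pos_right hwN]
  linarith

theorem condBulkProb_eq (K : ℕ) (n : Fin K → ℕ) {N : ℕ} (hN : 2 * ∑ i, n i ≤ N) :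
    condBulkProb w K n N = (∏ i, w (n i)) * w (N - ∑ i, n i) / maxAtLastWeight w K N := by
  have hn : ∀ i, n i ≤ N - ∑ i, n i := fun i => by
    have := single_le_sum (fun j _ => Nat.zero_le (n j)) (mem_univ i)
    omega
  rw [condBulkProb, maxAtLastWeight]
  congr 1
  calc _ = ∑ η ∈ Finset.Nat.antidiagonalTuple (K + 1) N,
        if Fin.init η ∈ ({n} : Finset (Fin K → ℕ)) then
          (if ∀ x, η x ≤ η (Fin.last K) then ∏ x, w (η x) else 0) else 0 := by
        refine sum_congr rfl fun η _ => ?_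
        simp only [mem_singleton, funext_iff, Fin.init, ← ite_and]
    _ = _ := by
        rw [Finset.Nat.sum_antidiagonalTuple_ite_init_mem _ (by simp only [mem_singleton, forall_eq]; omega), sum_singleton,
          if_pos]
        · simp [Fin.prod_univ_castSucc]
        · simpa [Fin.forall_fin_succ'] using hn

end Weights

theorem bulk_converges_to_critical_general (w : ℕ → ℝ) (hw : ∀ n, 0 < w n)
    (φc : ℝ)
    (hreg : Tendsto (fun n => w n / w (n + 1)) atTop (𝓝 φc))
    (hz : Summable fun n : ℕ => w n * φc ^ n)
    (K : ℕ)
    (hsub : Tendsto (fun N => Zconv w (K + 1) N / w N) atTop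
      (𝓝 (((K : ℝ) + 1) * (∑' n : ℕ, w n * φc ^ n) ^ K)))
    (n : Fin K → ℕ) :
    Tendsto (fun N => condBulkProb w K n N) atTop
      (𝓝 (∏ i, w (n i) * φc ^ (n i) / ∑' m : ℕ, w m * φc ^ m)) := by
  set z := ∑' m : ℕ, w m * φc ^ m
  have hφc : 0 ≤ φc := ge_of_tendsto' hreg fun k => (div_pos (hw k) (hw (k + 1))).le
  have hzpos : 0 < z :=
    hz.tsum_pos (fun k => mul_nonneg (hw k).le (pow_nonneg hφc k)) 0 (by simpa using hw 0)
  have hratio := tendsto_div_sub_of_tendsto_div_succ (fun k => (hw k).ne') hreg (∑ i, n i)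
  have hnum : Tendsto (fun N => (∏ i, w (n i)) * w (N - ∑ i, n i) / w N) atTop
      (𝓝 ((∏ i, w (n i)) * φc ^ ∑ i, n i)) :=
    (tendsto_const_nhds.mul hratio).congr fun N => (mul_div_assoc _ _ _).symm
  have hlim := hnum.div (tendsto_maxAtLastWeight_div w hw hreg hz K hsub) (pow_ne_zero K hzpos.ne')
  rw [prod_div_distrib, prod_mul_distrib, prod_pow_eq_pow_sum, prod_const, card_univ,
    Fintype.card_fin]
  refine hlim.congr' ?_
  filter_upwards [eventually_ge_atTop (2 * ∑ i, n i)] with N hN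
  rw [condBulkProb_eq w K n hN, Pi.div_apply, div_div_div_cancel_right₀ (hw N).ne']

/-- For condensing systems the distribution of the sites outside the maximum converges
pointwise to the critical product measure `Π_i w(n_i) φ_c^{n_i}/z(φ_c)`. -/
theorem bulk_converges_to_critical (w : ℕ → ℝ) (hw : ∀ n, 0 < w n)
    (φc : ℝ) (hφpos : 0 < φc)
    (hreg : Tendsto (fun n => w n / w (n + 1)) atTop (𝓝 φc))
    (hz : Summable fun n : ℕ => w n * φc ^ n)
    (K : ℕ) (hK : 1 ≤ K)
    (hsub : Tendsto (fun N => Zconv w (K + 1) N / w N) atTop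
      (𝓝 (((K : ℝ) + 1) * (∑' n : ℕ, w n * φc ^ n) ^ K)))
    (n : Fin K → ℕ) :
    Tendsto (fun N => condBulkProb w K n N) atTop
      (𝓝 (∏ i, w (n i) * φc ^ (n i) / ∑' m : ℕ, w m * φc ^ m)) :=
  bulk_converges_to_critical_general w hw φc hreg hz K hsub n
end

section
/- For w(n) = n^{−2} (n ≥ 1), w(0) = 1, the two-site partition function satisfies (N/log N)·(Z_{2,N}/w(N) − 2z(1)) → 4 as N → ∞, where z(1) = 1 + Σ_{n≥1} n^{−2} = 1 + π²/6. -/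
open Filter Topology

/-- Weights `w(0) = 1`, `w(n) = n^{-2}` for `n ≥ 1`. -/
noncomputable def wsq (n : ℕ) : ℝ :=
  if n = 0 then 1 else ((n : ℝ) ^ 2)⁻¹

/-- Two-site partition function `Z_{2,N} = Σ_{n=0}^N w(n) w(N-n)`. -/
noncomputable def ZtwoSq (N : ℕ) : ℝ :=
  ∑ k ∈ Finset.range (N + 1), wsq k * wsq (N - k)

/-!
Since `w(N)⁻¹ = N²`, an interior term of `Z_{2,N}/w(N)` with `k + m = N`, `k, m ≥ 1`, is
`(1/k + 1/m)² = 1/k² + 1/m² + (2/N)(1/k + 1/m)`. Summing over `k` gives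
`Z_{2,N}/w(N) - 2 z(1) = (4/N) H_{N-1} - 2 Σ_{k ≥ N} 1/k²`. The tail is at most `2/N`, so after
multiplying by `N / log N` it vanishes, while `H_{N-1} / log N → 1`.
-/

open Finset

theorem Finset.sum_range_reflect_succ {M : Type*} [AddCommMonoid M] (f : ℕ → M) (n : ℕ) :
    ∑ i ∈ range n, f (n - i) = ∑ i ∈ range n, f (i + 1) := by
  rw [← sum_range_reflect (fun i ↦ f (i + 1))]
  exact sum_congr rfl fun i hi ↦ by rw [mem_range] at hi; congr 1; omega

theorem Filter.Tendsto.div_tendsto_one_of_tendsto_sub {ι : Type*} {l : Filter ι} {f g : ι → ℝ}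
    {c : ℝ} (hfg : Tendsto (fun i ↦ f i - g i) l (𝓝 c)) (hg : Tendsto g l atTop) :
    Tendsto (fun i ↦ f i / g i) l (𝓝 1) := by
  have h := (hfg.mul hg.inv_tendsto_atTop).add_const 1
  simp only [Pi.inv_apply, mul_zero, zero_add] at h
  refine h.congr' ?_
  filter_upwards [hg.eventually_ne_atTop 0] with i hi
  field_simp
  ring

theorem Filter.Tendsto.div_atTop_of_isBoundedUnder {ι : Type*} {l : Filter ι} {f g : ι → ℝ}
    (hf : IsBoundedUnder (· ≤ ·) l (‖f ·‖)) (hg : Tendsto g l atTop) :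
    Tendsto (fun i ↦ f i / g i) l (𝓝 0) := by
  simpa only [div_eq_mul_inv, Pi.inv_apply] using
    isBoundedUnder_le_mul_tendsto_zero hf hg.inv_tendsto_atTop

theorem wsq_zero : wsq 0 = 1 := if_pos rfl

theorem wsq_mul_wsq_div_wsq_add {k m : ℕ} (hk : k ≠ 0) (hm : m ≠ 0) :
    wsq k * wsq m / wsq (k + m) =
      ((k : ℝ) ^ 2)⁻¹ + ((m : ℝ) ^ 2)⁻¹ + 2 / ((k + m : ℕ) : ℝ) * ((k : ℝ)⁻¹ + (m : ℝ)⁻¹) := by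
  have hkm : k + m ≠ 0 := by omega
  simp only [wsq, hk, hm, hkm, if_false]
  push_cast
  field_simp
  ring

theorem ZtwoSq_succ_div_wsq (n : ℕ) :
    ZtwoSq (n + 1) / wsq (n + 1) =
      2 + 2 * ∑ i ∈ range n, (((i + 1 : ℕ) : ℝ) ^ 2)⁻¹ + 4 / (n + 1 : ℝ) * harmonic n := by
  have hw : wsq (n + 1) ≠ 0 := by simp [wsq]; positivity
  have interior : ∀ i ∈ range n, wsq (i + 1) * wsq (n + 1 - (i + 1)) / wsq (n + 1) =
      (((i + 1 : ℕ) : ℝ) ^ 2)⁻¹ + (((n - i : ℕ) : ℝ) ^ 2)⁻¹ +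
        2 / (n + 1 : ℝ) * (((i + 1 : ℕ) : ℝ)⁻¹ + ((n - i : ℕ) : ℝ)⁻¹) := by
    intro i hi
    rw [mem_range] at hi
    have h := wsq_mul_wsq_div_wsq_add (k := i + 1) (m := n - i) (by omega) (by omega)
    rw [show i + 1 + (n - i) = n + 1 by omega] at h
    rw [show n + 1 - (i + 1) = n - i by omega, h]
    push_cast
    ring
  rw [ZtwoSq, sum_range_succ, sum_range_succ', add_div, add_div, sum_div, sum_congr rfl interior,
    sum_add_distrib, sum_add_distrib, ← mul_sum, sum_add_distrib,
    sum_range_reflect_succ (fun j ↦ ((j : ℝ) ^ 2)⁻¹),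
    sum_range_reflect_succ (fun j ↦ (j : ℝ)⁻¹), harmonic]
  simp only [wsq_zero, Nat.sub_zero, Nat.sub_self, one_mul, mul_one, div_self hw]
  push_cast
  ring

theorem hasSum_inv_succ_sq :
    HasSum (fun i : ℕ ↦ (((i + 1 : ℕ) : ℝ) ^ 2)⁻¹) (Real.pi ^ 2 / 6) := by
  simpa using (hasSum_nat_add_iff' 1).mpr hasSum_zeta_two

noncomputable def invSqTail (n : ℕ) : ℝ :=
  Real.pi ^ 2 / 6 - ∑ i ∈ range n, (((i + 1 : ℕ) : ℝ) ^ 2)⁻¹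

theorem invSqTail_nonneg (n : ℕ) : 0 ≤ invSqTail n :=
  sub_nonneg.mpr <| sum_le_hasSum _ (fun _ _ ↦ by positivity) hasSum_inv_succ_sq

theorem invSqTail_le (n : ℕ) : invSqTail n ≤ 2 / (n + 1) := by
  refine le_of_tendsto (hasSum_inv_succ_sq.tendsto_sum_nat.sub_const _) ?_
  filter_upwards [eventually_ge_atTop n] with m hm
  rw [← sum_range_add_sum_Ico _ hm, add_sub_cancel_left,
    sum_Ico_add' (fun j : ℕ ↦ ((j : ℝ) ^ 2)⁻¹), Ico_add_one_left_eq_Ioo]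
  exact sum_Ioo_inv_sq_le n (m + 1)

theorem tendsto_log_natCast_add_one_atTop :
    Tendsto (fun n : ℕ ↦ Real.log ((n : ℝ) + 1)) atTop atTop :=
  Real.tendsto_log_atTop.comp (tendsto_atTop_add_const_right _ 1 tendsto_natCast_atTop_atTop)

/-- For `w(n) = n^{-2}`: `(N/log N)(Z_{2,N}/w(N) − 2 z(1)) → 4` as `N → ∞`,
where `z(1) = 1 + π²/6`. -/
theorem ZtwoSq_correction_limit :
    Tendsto
      (fun N : ℕ => ((N : ℝ) / Real.log N) *
        (ZtwoSq N / wsq N - 2 * (1 + Real.pi ^ 2 / 6)))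
      atTop (𝓝 4) := by
  have harmonic_div_log : Tendsto (fun n : ℕ ↦ harmonic n / Real.log ((n : ℝ) + 1)) atTop (𝓝 1) :=
    Real.tendsto_harmonic_sub_log_add_one.div_tendsto_one_of_tendsto_sub
      tendsto_log_natCast_add_one_atTop
  have tail_div_log :
      Tendsto (fun n : ℕ ↦ ((n : ℝ) + 1) * invSqTail n / Real.log ((n : ℝ) + 1)) atTop (𝓝 0) := by
    refine Tendsto.div_atTop_of_isBoundedUnder ⟨2, eventually_map.mpr (.of_forall fun n ↦ ?_)⟩
      tendsto_log_natCast_add_one_atTop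
    rw [Real.norm_of_nonneg (mul_nonneg (by positivity) (invSqTail_nonneg n))]
    exact (le_div_iff₀' (by positivity)).mp (invSqTail_le n)
  rw [← tendsto_add_atTop_iff_nat 1]
  have hlim := (harmonic_div_log.const_mul 4).sub (tail_div_log.const_mul 2)
  rw [mul_one, mul_zero, sub_zero] at hlim
  refine hlim.congr' (.of_forall fun n ↦ ?_)
  simp only [ZtwoSq_succ_div_wsq, invSqTail]
  push_cast
  field_simp
  ring
end

section
/- Consider a misanthrope process whose stationary product weights satisfy w(n−1)/w(n) = r(n,0)/r(1,n−1), where the rates satisfy the monotonicity conditions r(n,m) ≤ r(n+1,m) and r(n,m) ≥ r(n,m+1). Then w(n−1)/w(n) is non-decreasing in n, hence converges to some φ_c ∈ (0,∞]; and if φ_c < ∞ then w(n) ≥ w(0) φ_c^{−n} for all n, so Σ_n w(n) φ_c^n = ∞, i.e. the critical partition function diverges and the process cannot condense. -/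
/-! The ratios `a n = w(n)/w(n+1) = r(n+1,0)/r(1,n)` increase by attractiveness, so they
converge to `φ_c = sup a n`. If `φ_c` is finite, every factor `a k⁻¹` of `w(n)` is at least
`φ_c⁻¹`, hence `w(n) φ_c^n ≥ 1` and the critical partition function diverges. -/

open Filter Topology

/-- Stationary weights of a misanthrope process:
`w(n) = Π_{k=1}^n r(1,k-1)/r(k,0)`. -/
noncomputable def misWeight (r : ℕ → ℕ → ℝ) (n : ℕ) : ℝ :=
  ∏ k ∈ Finset.range n, r 1 k / r (k + 1) 0

theorem Monotone.exists_pos_tendsto_ofReal {f : ℕ → ℝ} (hf : Monotone f) (h0 : 0 < f 0) :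
    ∃ L : ENNReal, 0 < L ∧ Tendsto (fun n => ENNReal.ofReal (f n)) atTop (𝓝 L) :=
  ⟨⨆ n, ENNReal.ofReal (f n),
    (ENNReal.ofReal_pos.mpr h0).trans_le (le_iSup (fun n => ENNReal.ofReal (f n)) 0),
    tendsto_atTop_iSup fun _ _ hab => ENNReal.ofReal_le_ofReal (hf hab)⟩

theorem inv_pow_le_prod_inv {a : ℕ → ℝ} {φ : ℝ} (ha : ∀ k, 0 < a k) (hφ : ∀ k, a k ≤ φ)
    (n : ℕ) : φ⁻¹ ^ n ≤ ∏ k ∈ Finset.range n, (a k)⁻¹ := by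
  calc φ⁻¹ ^ n = ∏ _k ∈ Finset.range n, φ⁻¹ := by rw [Finset.prod_const, Finset.card_range]
    _ ≤ ∏ k ∈ Finset.range n, (a k)⁻¹ :=
      Finset.prod_le_prod (fun k _ => inv_nonneg.mpr ((ha k).le.trans (hφ k)))
        fun k _ => inv_anti₀ (ha k) (hφ k)

theorem not_summable_of_forall_one_le {f : ℕ → ℝ} (hf : ∀ n, 1 ≤ f n) : ¬ Summable f :=
  fun hsum => by
    have := ge_of_tendsto hsum.tendsto_atTop_zero (Eventually.of_forall hf)
    norm_num at this

theorem misWeight_zero (r : ℕ → ℕ → ℝ) : misWeight r 0 = 1 :=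
  Finset.prod_range_zero _

theorem misWeight_eq_prod_inv (r : ℕ → ℕ → ℝ) (n : ℕ) :
    misWeight r n = ∏ k ∈ Finset.range n, (r (k + 1) 0 / r 1 k)⁻¹ := by
  simp only [misWeight, inv_div]

section rates

variable {r : ℕ → ℕ → ℝ}

theorem rate_ratio_pos (hrpos : ∀ n, 1 ≤ n → ∀ m, 0 < r n m) (n : ℕ) :
    0 < r (n + 1) 0 / r 1 n :=
  div_pos (hrpos (n + 1) n.succ_pos 0) (hrpos 1 le_rfl n)

theorem rate_ratio_monotone (hrpos : ∀ n, 1 ≤ n → ∀ m, 0 < r n m)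
    (hmono1 : ∀ n, 1 ≤ n → ∀ m, r n m ≤ r (n + 1) m)
    (hmono2 : ∀ n, 1 ≤ n → ∀ m, r n (m + 1) ≤ r n m) :
    Monotone fun n => r (n + 1) 0 / r 1 n :=
  monotone_nat_of_le_succ fun n =>
    div_le_div₀ (hrpos (n + 2) (n + 1).succ_pos 0).le (hmono1 (n + 1) n.succ_pos 0)
      (hrpos 1 le_rfl (n + 1)) (hmono2 1 le_rfl n)

theorem inv_pow_le_misWeight {φ : ℝ} (hpos : ∀ k, 0 < r (k + 1) 0 / r 1 k)
    (hφ : ∀ k, r (k + 1) 0 / r 1 k ≤ φ) (n : ℕ) : φ⁻¹ ^ n ≤ misWeight r n :=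
  misWeight_eq_prod_inv r n ▸ inv_pow_le_prod_inv hpos hφ n

theorem not_summable_misWeight_mul_pow {φ : ℝ} (hφ0 : 0 < φ)
    (hw : ∀ n, φ⁻¹ ^ n ≤ misWeight r n) : ¬ Summable fun n => misWeight r n * φ ^ n :=
  not_summable_of_forall_one_le fun n => by
    calc (1 : ℝ) = φ⁻¹ ^ n * φ ^ n := by rw [← mul_pow, inv_mul_cancel₀ hφ0.ne', one_pow]
      _ ≤ misWeight r n * φ ^ n := by gcongr; exact hw n

end rates

/-- For an attractive misanthrope process the ratio `w(n-1)/w(n) = r(n,0)/r(1,n-1)` is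
non-decreasing in `n`, hence converges to some `φ_c ∈ (0,∞]`; if `φ_c < ∞` then
`w(n) ≥ w(0) φ_c^{-n}`, so the critical partition function `Σ w(n) φ_c^n` diverges
and the process cannot condense. -/
theorem misanthrope_not_condensing (r : ℕ → ℕ → ℝ)
    (hrpos : ∀ n, 1 ≤ n → ∀ m, 0 < r n m)
    (hmono1 : ∀ n, 1 ≤ n → ∀ m, r n m ≤ r (n + 1) m)
    (hmono2 : ∀ n, 1 ≤ n → ∀ m, r n (m + 1) ≤ r n m) :
    Monotone (fun n : ℕ => r (n + 1) 0 / r 1 n) ∧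
    (∃ φc : ENNReal, 0 < φc ∧
      Tendsto (fun n : ℕ => ENNReal.ofReal (r (n + 1) 0 / r 1 n)) atTop (𝓝 φc)) ∧
    (∀ φc : ℝ, 0 < φc →
      Tendsto (fun n : ℕ => r (n + 1) 0 / r 1 n) atTop (𝓝 φc) →
      (∀ n : ℕ, misWeight r n ≥ misWeight r 0 * φc⁻¹ ^ n) ∧
      ¬ Summable fun n : ℕ => misWeight r n * φc ^ n) := by
  have hpos := rate_ratio_pos hrpos
  have hmono := rate_ratio_monotone hrpos hmono1 hmono2
  refine ⟨hmono, hmono.exists_pos_tendsto_ofReal (hpos 0), fun φc hφc htend => ?_⟩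
  have hw := inv_pow_le_misWeight hpos (hmono.ge_of_tendsto htend)
  exact ⟨fun n => by rw [misWeight_zero, one_mul]; exact hw n,
    not_summable_misWeight_mul_pow hφc hw⟩
end

section
/- For the generalized zero-range rates α_k(n) = k^{−b}(1−k/n)^{−b} for 1 ≤ k ≤ n−1, α_n(n)=1 (b > 0), the function k ↦ α_k(n+1) − R_k(n) is increasing in k for k ∈ {1,…,n}, where R_k(n) = Σ_{m=0}^{n−k}(α_{n−m}(n) − α_{n+1−m}(n+1)); hence the monotonicity condition α_k(n+1) ≥ R_k(n) for all k holds if and only if α_1(n+1) ≥ R_1(n). -/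
/-- Generalized zero-range jump rates:
`α_k(n) = k^{-b}(1-k/n)^{-b}` for `1 ≤ k ≤ n-1`, `α_n(n) = 1`, `α_0(n) = 0`. -/
noncomputable def gzrRate (b : ℝ) (k n : ℕ) : ℝ :=
  if k = 0 ∨ n = 0 then 0
  else if k < n then (k : ℝ) ^ (-b) * (1 - (k : ℝ) / (n : ℝ)) ^ (-b)
  else if k = n then 1
  else 0

/-- `R_k(n) = Σ_{m=0}^{n-k} (α_{n-m}(n) − α_{n+1-m}(n+1))`. -/
noncomputable def gzrR (b : ℝ) (k n : ℕ) : ℝ :=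
  ∑ m ∈ Finset.range (n - k + 1), (gzrRate b (n - m) n - gzrRate b (n + 1 - m) (n + 1))

/-! The increment of `k ↦ α_k(n+1) − R_k(n)` telescopes to `α_k(n) − α_k(n+1)`, and the rate
`α_k(n) = k^{-b}(1-k/n)^{-b}` strictly decreases in `n` because `1 - k/n` increases and `-b < 0`.
So the function is strictly increasing on `{1,…,n}`, and its minimum there is at `k = 1`. -/

section

variable {b : ℝ} {k n : ℕ}

lemma gzrRate_of_lt (hk : k ≠ 0) (hkn : k < n) :
    gzrRate b k n = (k : ℝ) ^ (-b) * (1 - (k : ℝ) / n) ^ (-b) := by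
  rw [gzrRate, if_neg (by omega), if_pos hkn]

lemma gzrRate_succ_lt (hb : 0 < b) (hk : k ≠ 0) (hkn : k < n) :
    gzrRate b k (n + 1) < gzrRate b k n := by
  rw [gzrRate_of_lt hk (by omega), gzrRate_of_lt hk hkn]
  have hk₀ : (0 : ℝ) < k := by positivity
  have hn₀ : (0 : ℝ) < n := by exact_mod_cast hk.bot_lt.trans hkn
  have hkn' : (k : ℝ) / n < 1 := (div_lt_one hn₀).mpr (by exact_mod_cast hkn)
  have hdiv : (k : ℝ) / (n + 1 : ℕ) < k / n := by
    push_cast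
    exact div_lt_div_of_pos_left hk₀ hn₀ (lt_add_one _)
  exact mul_lt_mul_of_pos_left
    (Real.rpow_lt_rpow_of_neg (by linarith) (by linarith) (by linarith)) (by positivity)

lemma gzrR_eq_gzrR_succ_add (hkn : k < n) :
    gzrR b k n = gzrR b (k + 1) n + (gzrRate b k n - gzrRate b (k + 1) (n + 1)) := by
  rw [gzrR, gzrR, show n - k + 1 = n - (k + 1) + 1 + 1 by omega, Finset.sum_range_succ,
    show n - (n - (k + 1) + 1) = k by omega, show n + 1 - (n - (k + 1) + 1) = k + 1 by omega]

theorem strictMonoOn_gzrRate_succ_sub_gzrR (hb : 0 < b) (n : ℕ) :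
    StrictMonoOn (fun k ↦ gzrRate b k (n + 1) - gzrR b k n) (Set.Icc 1 n) := by
  refine strictMonoOn_of_lt_add_one Set.ordConnected_Icc fun k _ hk hk₁ ↦ ?_
  rw [gzrR_eq_gzrR_succ_add hk₁.2]
  linarith [gzrRate_succ_lt hb (Nat.one_le_iff_ne_zero.mp hk.1) hk₁.2]

end

/-- `k ↦ α_k(n+1) − R_k(n)` is increasing on `{1,…,n}`; hence the monotonicity
condition `α_k(n+1) ≥ R_k(n)` for all `k ∈ {1,…,n}` holds iff it holds at `k = 1`. -/
theorem gzr_monotonicity_reduces_to_k_one (b : ℝ) (hb : 0 < b) (n : ℕ) (hn : 1 ≤ n) :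
    (∀ k : ℕ, 1 ≤ k → k < n →
      gzrRate b k (n + 1) - gzrR b k n < gzrRate b (k + 1) (n + 1) - gzrR b (k + 1) n) ∧
    ((∀ k : ℕ, 1 ≤ k → k ≤ n → gzrR b k n ≤ gzrRate b k (n + 1)) ↔
      gzrR b 1 n ≤ gzrRate b 1 (n + 1)) := by
  have hmono := strictMonoOn_gzrRate_succ_sub_gzrR hb n
  refine ⟨fun k hk hkn ↦ hmono ⟨hk, hkn.le⟩ ⟨by omega, hkn⟩ (lt_add_one k),
    fun h ↦ h 1 le_rfl hn, fun h₁ k hk hkn ↦ ?_⟩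
  have hle := hmono.monotoneOn ⟨le_rfl, hn⟩ ⟨hk, hkn⟩ hk
  linarith
end
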